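/- arXiv:1906.10620 — 8 statements merged into one kernel-verified Lean document; each statement's English description precedes it below -/
import Mathlib

section
/- The leader (Frobenius number) of any proper maximum sparse ideal of a numerical semigroup S is at least the conductor of S. -/
/-- A numerical semigroup: a subset of ℕ containing 0, closed under addition,
with finite complement. -/
def IsNumSemigroup (S : Set ℕ) : Prop :=
  0 ∈ S ∧ (∀ a ∈ S, ∀ b ∈ S, a + b ∈ S) ∧ Sᶜ.Finite

/-- An ideal of a numerical semigroup: `I ⊆ S` with `I + S ⊆ I` and `S \ I` finite. -/
def IsSemigroupIdeal (S I : Set ℕ) : Prop :=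
  I ⊆ S ∧ (∀ a ∈ I, ∀ b ∈ S, a + b ∈ I) ∧ (S \ I).Finite

/-- `Fb` is the Frobenius number of `I`: the largest integer not belonging to `I`. -/
def IsFrobenius (I : Set ℕ) (Fb : ℕ) : Prop :=
  Fb ∉ I ∧ ∀ k, Fb < k → k ∈ I

/-- An ideal is maximum sparse if its Frobenius number attains the bound
`2g - 1 + #(S \ I)`. -/
def IsMaxSparse (S I : Set ℕ) (g : ℕ) : Prop :=
  ∃ Fb : ℕ, IsFrobenius I Fb ∧ (Fb : ℤ) = 2 * g - 1 + (S \ I).ncard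

/-- `c` is the conductor of `S`: the smallest integer with `c + ℕ ⊆ S`. -/
def IsConductor (S : Set ℕ) (c : ℕ) : Prop :=
  (∀ k, c ≤ k → k ∈ S) ∧ ∀ c' : ℕ, (∀ k, c' ≤ k → k ∈ S) → c ≤ c'

/-- `D(c) = S ∩ (c - S)`: the nongaps `s` with `c - s` also a nongap. -/
def Dset (S : Set ℕ) (c : ℕ) : Set ℕ :=
  {s ∈ S | ∃ t ∈ S, s + t = c}

/-!
Since `c - 1` is a gap and `S` is additively closed, `s ↦ c - 1 - s` sends the elements of `S`
below `c` injectively to gaps, so `c ≤ 2g`. A proper ideal misses some element of `S`, so its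
leader `2g - 1 + #(S \ I)` is at least `2g`.
-/

open Finset

section Gaps

variable {S : Set ℕ} [DecidablePred (· ∈ S)]

lemma card_filter_mem_le_card_filter_notMem_of_notMem
    (hadd : ∀ a ∈ S, ∀ b ∈ S, a + b ∈ S) {f : ℕ} (hf : f ∉ S) :
    #{s ∈ range (f + 1) | s ∈ S} ≤ #{s ∈ range (f + 1) | s ∉ S} := by
  refine card_le_card_of_injOn (fun s => f - s) (fun s hs => ?_) (fun s hs t ht h => ?_)
  · simp only [coe_filter, mem_range, Set.mem_ofPred_eq] at hs ⊢
    refine ⟨by omega, fun hmem => hf ?_⟩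
    simpa [Nat.add_sub_cancel' (Nat.lt_succ_iff.mp hs.1)] using hadd s hs.2 _ hmem
  · simp only [coe_filter, mem_range, Set.mem_ofPred_eq] at hs ht h
    omega

lemma card_filter_notMem_le_ncard_compl (hfin : Sᶜ.Finite) (n : ℕ) :
    #{s ∈ range n | s ∉ S} ≤ Sᶜ.ncard := by
  rw [← Set.ncard_coe_finset]
  exact Set.ncard_le_ncard (fun x hx => by simp_all) hfin

lemma succ_le_two_mul_ncard_compl_of_notMem (hadd : ∀ a ∈ S, ∀ b ∈ S, a + b ∈ S)
    (hfin : Sᶜ.Finite) {f : ℕ} (hf : f ∉ S) : f + 1 ≤ 2 * Sᶜ.ncard := by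
  have hsplit := card_filter_add_card_filter_not (s := range (f + 1)) (· ∈ S)
  have := card_filter_mem_le_card_filter_notMem_of_notMem hadd hf
  have := card_filter_notMem_le_ncard_compl hfin (f + 1)
  rw [card_range] at hsplit
  omega

end Gaps

lemma IsConductor.pred_notMem {S : Set ℕ} {c : ℕ} (hc : IsConductor S c) (hpos : 0 < c) :
    c - 1 ∉ S := by
  intro hmem
  have := hc.2 (c - 1) fun k hk => by
    rcases hk.eq_or_lt with rfl | hlt
    exacts [hmem, hc.1 k (by omega)]
  omega

lemma IsConductor.le_two_mul_ncard_compl {S : Set ℕ} {c : ℕ} (hc : IsConductor S c)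
    (hadd : ∀ a ∈ S, ∀ b ∈ S, a + b ∈ S) (hfin : Sᶜ.Finite) : c ≤ 2 * Sᶜ.ncard := by
  classical
  rcases Nat.eq_zero_or_pos c with rfl | hpos
  · exact Nat.zero_le _
  have := succ_le_two_mul_ncard_compl_of_notMem hadd hfin (hc.pred_notMem hpos)
  omega

lemma IsSemigroupIdeal.one_le_ncard_diff {S I : Set ℕ} (hI : IsSemigroupIdeal S I)
    (hproper : I ≠ S) : 1 ≤ (S \ I).ncard :=
  (Set.ncard_pos hI.2.2).mpr <| Set.sdiff_nonempty.mpr fun hSI => hproper (hI.1.antisymm hSI)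

theorem leader_ge_conductor_general (S I : Set ℕ) (g c Fb : ℕ)
    (hS : IsNumSemigroup S) (hg : Sᶜ.ncard = g)
    (hc : IsConductor S c)
    (hI : IsSemigroupIdeal S I) (hproper : I ≠ S)
    (hmax : (Fb : ℤ) = 2 * g - 1 + (S \ I).ncard) :
    c ≤ Fb := by
  have hcg : c ≤ 2 * g := hg ▸ hc.le_two_mul_ncard_compl hS.2.1 hS.2.2
  have hmissing : 1 ≤ (S \ I).ncard := hI.one_le_ncard_diff hproper
  omega

/-- The leader (Frobenius number) of a proper maximum sparse ideal is at least
the conductor of the numerical semigroup. -/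
theorem leader_ge_conductor (S I : Set ℕ) (g c Fb : ℕ)
    (hS : IsNumSemigroup S) (hg : Sᶜ.ncard = g)
    (hc : IsConductor S c)
    (hI : IsSemigroupIdeal S I) (hproper : I ≠ S)
    (hF : IsFrobenius I Fb) (hmax : (Fb : ℤ) = 2 * g - 1 + (S \ I).ncard) :
    c ≤ Fb :=
  leader_ge_conductor_general S I g c Fb hS hg hc hI hproper hmax
end

section
/- Let I and I' be proper maximum sparse ideals of a numerical semigroup S with leaders λ_i and λ_{i'} respectively. Then I' ⊇ I if and only if λ_i - λ_{i'} ∈ S. -/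
lemma maxSparse_key (S I : Set ℕ) (g Fb : ℕ)
    (hS : IsNumSemigroup S) (hg : Sᶜ.ncard = g)
    (hI : IsSemigroupIdeal S I) (hF : IsFrobenius I Fb)
    (hmax : (Fb : ℤ) = 2 * g - 1 + (S \ I).ncard) :
    ∀ x, x ≤ Fb → Fb - x ∉ S → x ∈ I := by
  intro x hx hxS
  have hIcsub : Iᶜ ⊆ Set.Iic Fb := by
    intro y hy
    by_contra hy'
    exact hy (hF.2 y (by simpa using hy'))
  have hScI : Sᶜ ⊆ Iᶜ := fun y hy hyI => hy (hI.1 hyI)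
  have hIceq : Iᶜ = Sᶜ ∪ (S \ I) := by
    ext y
    by_cases hyS : y ∈ S
    · simp [hyS]
    · simp [hyS]
      exact fun h => hyS (hI.1 h)
  have hIcfin : Iᶜ.Finite := by
    rw [hIceq]; exact hS.2.2.union hI.2.2
  have hIcncard : Iᶜ.ncard = g + (S \ I).ncard := by
    rw [hIceq, Set.ncard_union_eq
      (disjoint_compl_left.mono_right Set.diff_subset) hS.2.2 hI.2.2, hg]
  set B : Set ℕ := I ∩ Set.Iic Fb with hB
  have hBfin : B.Finite := (Set.finite_Iic Fb).subset Set.inter_subset_right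
  have hsplit : Set.Iic Fb = B ∪ Iᶜ := by
    ext y
    constructor
    · intro hy
      by_cases hyI : y ∈ I
      · exact Or.inl ⟨hyI, hy⟩
      · exact Or.inr hyI
    · rintro (⟨_, hy⟩ | hy)
      · exact hy
      · exact hIcsub hy
  have hdisj : Disjoint B Iᶜ := Set.disjoint_left.mpr (fun a ha hb => hb ha.1)
  have hIic : (Set.Iic Fb).ncard = Fb + 1 := by
    rw [← Finset.coe_Iic, Set.ncard_coe_finset, Nat.card_Iic]
  have hcount : Fb + 1 = B.ncard + (g + (S \ I).ncard) := by
    rw [← hIic, hsplit, Set.ncard_union_eq hdisj hBfin hIcfin, hIcncard]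
  have hBcard : B.ncard = g := by
    have h2 : (Fb : ℤ) + 1 = B.ncard + (g + (S \ I).ncard) := by exact_mod_cast hcount
    omega
  set A : Set ℕ := (fun y => Fb - y) '' Sᶜ with hA
  have hScIic : Sᶜ ⊆ Set.Iic Fb := fun y hy => hIcsub (hScI hy)
  have hAcard : A.ncard = g := by
    rw [hA, Set.ncard_image_of_injOn, hg]
    intro y1 h1 y2 h2 h12
    have := hScIic h1
    have := hScIic h2
    simp only [Set.mem_Iic] at *
    omega
  have hBA : B ⊆ A := by
    rintro z ⟨hzI, hzF⟩
    simp only [Set.mem_Iic] at hzF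
    have hzS : Fb - z ∉ S := by
      intro hmem
      have : z + (Fb - z) ∈ I := hI.2.1 z hzI _ hmem
      rw [Nat.add_sub_cancel' hzF] at this
      exact hF.1 this
    exact ⟨Fb - z, hzS, by show Fb - (Fb - z) = z; omega⟩
  have hAB : A = B := (Set.eq_of_subset_of_ncard_le hBA (by omega)
    (hIcfin.subset hScI |>.image _)).symm
  have hxA : x ∈ A := ⟨Fb - x, hxS, by show Fb - (Fb - x) = x; omega⟩
  rw [hAB] at hxA
  exact hxA.1

/-- For proper maximum sparse ideals `I, I'` with leaders `Fb, Fb'`, we have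
`I ⊆ I'` if and only if `Fb - Fb' ∈ S`. -/
theorem maxSparse_subset_iff_sub_leader (S I I' : Set ℕ) (g Fb Fb' : ℕ)
    (hS : IsNumSemigroup S) (hg : Sᶜ.ncard = g)
    (hI : IsSemigroupIdeal S I) (hproper : I ≠ S)
    (hI' : IsSemigroupIdeal S I') (hproper' : I' ≠ S)
    (hF : IsFrobenius I Fb) (hmax : (Fb : ℤ) = 2 * g - 1 + (S \ I).ncard)
    (hF' : IsFrobenius I' Fb') (hmax' : (Fb' : ℤ) = 2 * g - 1 + (S \ I').ncard) :
    I ⊆ I' ↔ ∃ s ∈ S, (s : ℤ) = (Fb : ℤ) - (Fb' : ℤ) := by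
  constructor
  · intro h
    have hFb'I : Fb' ∉ I := fun hmem => hF'.1 (h hmem)
    have hle : Fb' ≤ Fb := by
      by_contra hlt
      exact hFb'I (hF.2 Fb' (by omega))
    refine ⟨Fb - Fb', ?_, by push_cast [Nat.cast_sub hle]; ring⟩
    by_contra hs
    exact hFb'I (maxSparse_key S I g Fb hS hg hI hF hmax Fb' hle hs)
  · rintro ⟨s, hsS, hseq⟩
    have heq : Fb = Fb' + s := by omega
    intro x hxI
    by_cases hx : Fb' < x
    · exact hF'.2 x hx
    · push_neg at hx
      refine maxSparse_key S I' g Fb' hS hg hI' hF' hmax' x hx ?_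
      intro ht
      have hst : s + (Fb' - x) ∈ S := hS.2.1 s hsS _ ht
      have : x + (s + (Fb' - x)) ∈ I := hI.2.1 x hxI _ hst
      have hxFb : x + (s + (Fb' - x)) = Fb := by omega
      rw [hxFb] at this
      exact hF.1 this
end

section
/- Let I and I' be proper maximum sparse ideals of a numerical semigroup S. Then I' ⊇ I if and only if #(S \ I) - #(S \ I') ∈ S. -/
set_option linter.unnecessarySeqFocus false
set_option linter.unusedTactic false

lemma key (S I : Set ℕ) (g n Fb : ℕ) (hS : IsNumSemigroup S)
    (hg : Sᶜ.ncard = g) (hI : IsSemigroupIdeal S I) (hn : (S \ I).ncard = n)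
    (hF : IsFrobenius I Fb) (hFb : Fb + 1 = 2 * g + n) :
    ∀ k, k ≤ Fb → Fb - k ∉ S → k ∈ I := by
  obtain ⟨hsub, hadd, hfin⟩ := hI
  -- complement of I
  have hIc : Iᶜ = Sᶜ ∪ (S \ I) := by
    ext k
    by_cases hk : k ∈ S <;> simp [hk] <;> tauto
  have hIcFin : Iᶜ.Finite := by rw [hIc]; exact hS.2.2.union hfin
  have hIcCard : Iᶜ.ncard = g + n := by
    rw [hIc, Set.ncard_union_eq (by simp [Set.disjoint_left]; tauto) hS.2.2 hfin, hg, hn]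
  set A : Set ℕ := {k | k ∈ I ∧ k ≤ Fb} with hA
  have hAfin : A.Finite := (Set.finite_Iic Fb).subset (fun k hk => hk.2)
  have hsplit : Set.Iic Fb = A ∪ Iᶜ := by
    ext k
    simp only [Set.mem_Iic, Set.mem_union, hA, Set.mem_setOf_eq, Set.mem_compl_iff]
    constructor
    · intro h; by_cases hkI : k ∈ I <;> tauto
    · rintro (⟨_, h⟩ | h)
      · exact h
      · by_contra hc; exact h (hF.2 k (by omega))
  have hdisj : Disjoint A Iᶜ := by
    simp [Set.disjoint_left, hA]; tauto
  have hIicCard : (Set.Iic Fb).ncard = Fb + 1 := by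
    rw [show Set.Iic Fb = ↑(Finset.Iic Fb) by simp, Set.ncard_coe_finset]
    simp
  have hAcard : A.ncard = g := by
    have := Set.ncard_union_eq hdisj hAfin hIcFin
    rw [← hsplit, hIicCard, hIcCard] at this
    omega
  -- image of A under k ↦ Fb - k
  have himg : (fun k => Fb - k) '' A ⊆ Sᶜ := by
    rintro m ⟨k, ⟨hkI, hkF⟩, rfl⟩
    intro hmS
    have : Fb ∈ I := by
      have := hadd k hkI (Fb - k) hmS
      rwa [show k + (Fb - k) = Fb by omega] at this
    exact hF.1 this
  have hinj : Set.InjOn (fun k => Fb - k) A := by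
    rintro a ⟨_, ha⟩ b ⟨_, hb⟩ hab
    simp only at hab; omega
  have himgcard : ((fun k => Fb - k) '' A).ncard = g := by
    rw [Set.ncard_image_of_injOn hinj, hAcard]
  have heq : (fun k => Fb - k) '' A = Sᶜ :=
    Set.eq_of_subset_of_ncard_le himg (by rw [himgcard, hg]) hS.2.2
  intro k hk hkS
  have : Fb - k ∈ (fun k => Fb - k) '' A := heq ▸ hkS
  obtain ⟨k', ⟨hk'I, hk'F⟩, hk'⟩ := this
  simp only at hk'
  have : k' = k := by omega
  exact this ▸ hk'I

lemma npos (S I : Set ℕ) (hI : IsSemigroupIdeal S I) (hproper : I ≠ S) :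
    1 ≤ (S \ I).ncard := by
  have : (S \ I).Nonempty := by
    rw [Set.diff_nonempty]
    intro h
    exact hproper (le_antisymm hI.1 h)
  exact (Set.ncard_pos hI.2.2).mpr this

/-- For proper maximum sparse ideals `I, I'` of `S`, we have `I ⊆ I'` if and only
if `#(S \ I) - #(S \ I') ∈ S`. -/
theorem maxSparse_subset_iff_sub_card (S I I' : Set ℕ) (g : ℕ)
    (hS : IsNumSemigroup S) (hg : Sᶜ.ncard = g)
    (hI : IsSemigroupIdeal S I) (hproper : I ≠ S) (hmax : IsMaxSparse S I g)
    (hI' : IsSemigroupIdeal S I') (hproper' : I' ≠ S) (hmax' : IsMaxSparse S I' g) :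
    I ⊆ I' ↔ ∃ s ∈ S, (s : ℤ) = ((S \ I).ncard : ℤ) - ((S \ I').ncard : ℤ) := by
  obtain ⟨Fb, hF, hFeq⟩ := hmax
  obtain ⟨Fb', hF', hFeq'⟩ := hmax'
  set n := (S \ I).ncard with hn
  set n' := (S \ I').ncard with hn'
  have hn1 : 1 ≤ n := npos S I hI hproper
  have hn1' : 1 ≤ n' := npos S I' hI' hproper'
  have hFb : Fb + 1 = 2 * g + n := by
    have : (Fb : ℤ) + 1 = 2 * g + n := by rw [hFeq]; ring
    exact_mod_cast this
  have hFb' : Fb' + 1 = 2 * g + n' := by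
    have : (Fb' : ℤ) + 1 = 2 * g + n' := by rw [hFeq']; ring
    exact_mod_cast this
  have hkey := key S I g n Fb hS hg hI rfl hF hFb
  have hkey' := key S I' g n' Fb' hS hg hI' rfl hF' hFb'
  constructor
  · intro hsub
    have hle : Fb' ≤ Fb := by
      by_contra h
      exact hF'.1 (hsub (hF.2 Fb' (by omega)))
    refine ⟨Fb - Fb', ?_, by push_cast; omega⟩
    by_contra hd
    exact hF'.1 (hsub (hkey Fb' hle hd))
  · rintro ⟨s, hsS, hs⟩
    have hFbs : Fb = Fb' + s := by
      have : (s : ℤ) = (Fb : ℤ) - Fb' := by rw [hFeq, hFeq', hs]; ring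
      omega
    intro k hkI
    by_contra hkI'
    have hkF' : k ≤ Fb' := by
      by_contra h
      exact hkI' (hF'.2 k (by omega))
    have hFk : Fb' - k ∈ S := by
      by_contra h
      exact hkI' (hkey' k hkF' h)
    have : Fb - k ∈ S := by
      have := hS.2.1 _ hFk s hsS
      rwa [show Fb' - k + s = Fb - k by omega] at this
    have : Fb ∈ I := by
      have h2 := hI.2.1 k hkI (Fb - k) this
      rwa [show k + (Fb - k) = Fb by omega] at h2
    exact hF.1 this
end

section
/- In a numerical semigroup S, the set L of nonzero elements λ of S such that λ is not the sum of two gaps of S is an ideal of S, i.e., L + S ⊆ L. -/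
/-- The set `L` of nonzero nongaps of `S` that are not a sum of two gaps is an
ideal of `S`, i.e. `L + S ⊆ L`. -/
theorem leaders_form_ideal (S : Set ℕ) (hS : IsNumSemigroup S) :
    ∀ l ∈ {x ∈ S | x ≠ 0 ∧ ¬∃ a b : ℕ, a ∉ S ∧ b ∉ S ∧ a + b = x},
      ∀ s ∈ S,
        l + s ∈ {x ∈ S | x ≠ 0 ∧ ¬∃ a b : ℕ, a ∉ S ∧ b ∉ S ∧ a + b = x} := by
  obtain ⟨h0, hadd, -⟩ := hS
  rintro l ⟨hlS, hl0, hlL⟩ s hsS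
  -- Key lemma: since `l` is not a sum of two gaps, there are no two gaps
  -- differing by exactly `l`.
  have M : ∀ g, g ∉ S → g + l ∈ S := by
    intro g
    induction g using Nat.strong_induction_on with
    | _ g ih =>
      intro hg
      by_contra hgl
      have hg0 : g ≠ 0 := fun h => hg (h ▸ h0)
      rcases lt_or_ge g l with hlt | hge
      · -- main case: 0 < g < l
        -- all multiples (k+1)*g with k*g < l are gaps
        have P : ∀ k : ℕ, k * g < l → (k + 1) * g ∉ S := by
          intro k
          induction k with
          | zero => intro _ h; exact hg (by simpa using h)
          | succ n ihn =>
            intro hlt2 hmem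
            have h1 : n * g < l :=
              lt_of_le_of_lt (Nat.mul_le_mul_right g (Nat.le_succ n)) hlt2
            have h2 : (n + 1) * g ∉ S := ihn h1
            have h3 : l - (n + 1) * g ∈ S := by
              by_contra hc
              exact hlL ⟨(n + 1) * g, l - (n + 1) * g, h2, hc, by omega⟩
            have h4 := hadd _ hmem _ h3
            have h5 : (n + 1 + 1) * g + (l - (n + 1) * g) = g + l := by
              have : (n + 1) * g ≤ l := le_of_lt hlt2
              have e1 : (n + 1 + 1) * g = (n + 1) * g + g := by ring
              omega
            rw [h5] at h4
            exact hgl h4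
        obtain ⟨q, r, hdiv, hrg⟩ : ∃ q r, l = q * g + r ∧ r < g :=
          ⟨l / g, l % g, by rw [Nat.mul_comm]; exact (Nat.div_add_mod l g).symm,
            Nat.mod_lt l (Nat.pos_of_ne_zero hg0)⟩
        rcases Nat.eq_zero_or_pos r with hr0 | hrpos
        · -- g divides l : then l itself would be a "gap", contradiction
          have hq1 : q ≠ 0 := by
            intro h
            rw [h, Nat.zero_mul] at hdiv
            omega
          have h1 : (q - 1) * g < l := by
            have e : (q - 1) * g = q * g - g := by rw [Nat.sub_mul, one_mul]
            omega
          have h2 := P (q - 1) h1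
          have h3 : (q - 1 + 1) * g = l := by
            have : q - 1 + 1 = q := by omega
            rw [this]; omega
          rw [h3] at h2
          exact h2 hlS
        · -- g does not divide l : descend to the smaller gap  g - r
          have hqg : q * g < l := by omega
          have hk : (q + 1) * g ∉ S := P q hqg
          have hxg : g - r < g := by omega
          have hxS : g - r ∉ S := by
            intro hx
            have h4 := hadd _ hlS _ hx
            have h5 : l + (g - r) = (q + 1) * g := by
              have e1 : (q + 1) * g = q * g + g := by ring
              omega
            rw [h5] at h4
            exact hk h4
          have h6 := ih (g - r) hxg hxS
          have h7 : g - r + l = (q + 1) * g := by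
            have e1 : (q + 1) * g = q * g + g := by ring
            omega
          rw [h7] at h6
          exact hk h6
      · -- g ≥ l : reduce to g - l
        have hne : g ≠ l := fun h => hg (h ▸ hlS)
        have h1 : g - l ∉ S := by
          intro h
          have h2 := hadd _ h _ hlS
          rw [Nat.sub_add_cancel hge] at h2
          exact hg h2
        have hl0' : 0 < l := Nat.pos_of_ne_zero hl0
        have h3 := ih (g - l) (by omega) h1
        rw [Nat.sub_add_cancel hge] at h3
        exact hg h3
  refine ⟨hadd l hlS s hsS, by omega, ?_⟩
  rintro ⟨a, b, haS, hbS, hab⟩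
  rcases lt_trichotomy a l with h | h | h
  · -- a < l : then l - a ∈ S, hence b = (l - a) + s ∈ S, contradiction
    have h1 : l - a ∈ S := by
      by_contra hc
      exact hlL ⟨a, l - a, haS, hc, by omega⟩
    have h2 := hadd _ h1 _ hsS
    have h3 : l - a + s = b := by omega
    rw [h3] at h2
    exact hbS h2
  · exact haS (h ▸ hlS)
  · -- a > l : then a - l and a = (a - l) + l are both gaps, contradicting M
    have h1 : a - l ∉ S := by
      intro hc
      have h2 := hadd _ hc _ hlS
      rw [Nat.sub_add_cancel h.le] at h2
      exact haS h2
    have h3 := M (a - l) h1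
    rw [Nat.sub_add_cancel h.le] at h3
    exact haS h3
end

section
/- Let S be a numerical semigroup with conductor c. Every nonzero element λ of S with λ < c can be written as the sum of two gaps of S. -/
/-- Every nonzero element of `S` smaller than the conductor is a sum of two gaps. -/
theorem small_nongap_sum_of_gaps (S : Set ℕ) (c : ℕ)
    (hS : IsNumSemigroup S) (hc : IsConductor S c) :
    ∀ l ∈ S, l ≠ 0 → l < c → ∃ a b : ℕ, a ∉ S ∧ b ∉ S ∧ a + b = l := by
  intro l hl hl0 hlc
  by_contra hcon
  push_neg at hcon
  have hpair : ∀ a, a ≤ l → a ∉ S → l - a ∈ S := by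
    intro a ha haS
    by_contra hb
    exact hcon a (l - a) haS hb (by omega)
  obtain ⟨h0, hadd, hfin⟩ := hS
  have key : ∀ k, l ≤ k → k ∈ S := by
    intro k
    induction k using Nat.strong_induction_on with
    | _ k IH =>
      intro hk
      rcases eq_or_lt_of_le hk with heq | hlt
      · rwa [← heq]
      · have ht1 : 1 ≤ k - l := by omega
        by_cases htl : l ≤ k - l
        · have h1 : k - l ∈ S := IH (k - l) (by omega) htl
          have h2 := hadd l hl (k - l) h1
          rwa [show l + (k - l) = k by omega] at h2
        · push_neg at htl
          by_cases htS : k - l ∈ S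
          · have h2 := hadd l hl (k - l) htS
            rwa [show l + (k - l) = k by omega] at h2
          · have inner : ∀ j, 1 ≤ j → (k ∈ S ∨ (j * (k - l) < l ∧ l - j * (k - l) ∈ S)) := by
              intro j
              induction j with
              | zero => omega
              | succ j IHj =>
                rintro -
                rcases Nat.eq_zero_or_pos j with hj0 | hj1
                · subst hj0
                  right
                  rw [show (0 + 1) * (k - l) = k - l by ring]
                  exact ⟨htl, hpair (k - l) (by omega) htS⟩
                · rcases IHj hj1 with hK | ⟨hjl, hA⟩
                  · exact Or.inl hK
                  · have hexp : (j + 1) * (k - l) = j * (k - l) + (k - l) := by ring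
                    by_cases hcase : (j + 1) * (k - l) < l
                    · by_cases hB : (j + 1) * (k - l) ∈ S
                      · left
                        have h2 := hadd _ hA _ hB
                        rwa [show l - j * (k - l) + (j + 1) * (k - l) = k by
                          rw [hexp]; omega] at h2
                      · right
                        exact ⟨hcase, hpair _ (by omega) hB⟩
                    · left
                      have hb : (j + 1) * (k - l) ∈ S := by
                        refine IH _ ?_ ?_ <;> omega
                      have h2 := hadd _ hA _ hb
                      rwa [show l - j * (k - l) + (j + 1) * (k - l) = k by
                        rw [hexp]; omega] at h2
            rcases inner l (by omega) with hK | ⟨hjl, -⟩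
            · exact hK
            · have : l ≤ l * (k - l) := Nat.le_mul_of_pos_right l ht1
              omega
  exact absurd (hc.2 l key) (by omega)
end

section
/- Let S be a numerical semigroup of genus g and let a satisfy 1 ≤ a ≤ 2g. Then the number of elements of S in the interval [1, a] is at most a/2, and the number of elements of S in the interval [a+1, 2g] is at least (2g - a)/2. -/
lemma dp_sum (S : Set ℕ) (m n : ℕ) :
    (S ∩ Set.Icc m n).ncard + (Sᶜ ∩ Set.Icc m n).ncard = (Set.Icc m n).ncard := by
  have hdis : Disjoint (S ∩ Set.Icc m n) (Sᶜ ∩ Set.Icc m n) :=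
    Set.disjoint_left.2 (fun x hx hx' => hx'.1 hx.1)
  have h1 : (S ∩ Set.Icc m n).Finite := (Set.finite_Icc m n).subset Set.inter_subset_right
  have h2 : (Sᶜ ∩ Set.Icc m n).Finite := (Set.finite_Icc m n).subset Set.inter_subset_right
  rw [← Set.ncard_union_eq hdis h1 h2]
  congr 1
  ext x
  by_cases h : x ∈ S <;> simp [h]

lemma dp_Icc_ncard (m n : ℕ) : (Set.Icc m n).ncard = n + 1 - m := by
  rw [Set.ncard_eq_toFinset_card']
  simp [Nat.card_Icc]

lemma dp_split (S : Set ℕ) (a b : ℕ) (hab : a ≤ b) :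
    (S ∩ Set.Icc 1 b).ncard
      = (S ∩ Set.Icc 1 a).ncard + (S ∩ Set.Icc (a+1) b).ncard := by
  have hdis : Disjoint (S ∩ Set.Icc 1 a) (S ∩ Set.Icc (a+1) b) :=
    Set.disjoint_left.2 (fun x hx hx' => by
      have h1 : x ≤ a := hx.2.2
      have h2 : a + 1 ≤ x := hx'.2.1
      omega)
  have h1 : (S ∩ Set.Icc 1 a).Finite := (Set.finite_Icc 1 a).subset Set.inter_subset_right
  have h2 : (S ∩ Set.Icc (a+1) b).Finite :=
    (Set.finite_Icc (a+1) b).subset Set.inter_subset_right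
  rw [← Set.ncard_union_eq hdis h1 h2]
  congr 1
  ext x
  simp only [Set.mem_inter_iff, Set.mem_Icc, Set.mem_union]
  constructor
  · rintro ⟨hx, hx1, hx2⟩
    rcases le_or_gt x a with h | h
    · exact Or.inl ⟨hx, hx1, h⟩
    · exact Or.inr ⟨hx, h, hx2⟩
  · rintro (⟨hx, hx1, hx2⟩ | ⟨hx, hx1, hx2⟩) <;> exact ⟨hx, by omega, by omega⟩

lemma dp_pairing (S : Set ℕ) (hS : IsNumSemigroup S) (ℓ : ℕ) (hl : ℓ ∉ S) :
    2 * (S ∩ Set.Icc 1 (ℓ - 1)).ncard ≤ ℓ - 1 := by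
  obtain ⟨h0, hadd, hfin⟩ := hS
  have hl1 : 1 ≤ ℓ := Nat.one_le_iff_ne_zero.2 (fun h => hl (h ▸ h0))
  have hinj : (S ∩ Set.Icc 1 (ℓ-1)).ncard ≤ (Sᶜ ∩ Set.Icc 1 (ℓ-1)).ncard := by
    refine Set.ncard_le_ncard_of_injOn (fun x => ℓ - x) ?_ ?_
      ((Set.finite_Icc 1 (ℓ-1)).subset Set.inter_subset_right)
    · rintro x ⟨hxS, hx1, hx2⟩
      show ℓ - x ∈ Sᶜ ∩ Set.Icc 1 (ℓ - 1)
      have hx2' : x ≤ ℓ - 1 := hx2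
      have hx1' : 1 ≤ x := hx1
      refine ⟨fun hmem => hl ?_, by omega, by omega⟩
      have := hadd x hxS (ℓ - x) hmem
      rwa [Nat.add_sub_cancel' (by omega)] at this
    · intro x hx y hy hxy
      have hx2 : x ≤ ℓ - 1 := hx.2.2
      have hy2 : y ≤ ℓ - 1 := hy.2.2
      simp only at hxy
      omega
  have hsum := dp_sum S 1 (ℓ-1)
  rw [dp_Icc_ncard] at hsum
  omega

/-- Dyck path / Clifford formulation: for `1 ≤ a ≤ 2g`, the number of nongaps in
`[1, a]` is at most `a/2`, and the number of nongaps in `[a+1, 2g]` is at least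
`(2g - a)/2`. -/
theorem dyck_path (S : Set ℕ) (g a : ℕ)
    (hS : IsNumSemigroup S) (hg : Sᶜ.ncard = g)
    (ha1 : 1 ≤ a) (ha2 : a ≤ 2 * g) :
    2 * (S ∩ Set.Icc 1 a).ncard ≤ a ∧
    2 * g - a ≤ 2 * (S ∩ Set.Icc (a + 1) (2 * g)).ncard := by
  classical
  have h0 : 0 ∈ S := hS.1
  have hfin : Sᶜ.Finite := hS.2.2
  have part1 : 2 * (S ∩ Set.Icc 1 a).ncard ≤ a := by
    by_cases haS : a ∈ S
    · by_cases hgap : ∃ m, a ≤ m ∧ m ∉ S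
      · set ℓ := Nat.find hgap with hℓdef
        obtain ⟨hal, hlS⟩ := Nat.find_spec hgap
        have hmin : ∀ m, m < ℓ → a ≤ m → m ∈ S := by
          intro m hm ham
          by_contra h
          exact (Nat.find_min hgap hm) ⟨ham, h⟩
        have hla : a + 1 ≤ ℓ := by
          have hne : ℓ ≠ a := fun h => hlS (by rw [← hℓdef, h]; exact haS)
          omega
        have hsplit := dp_split S a (ℓ - 1) (by omega)
        have hfull : S ∩ Set.Icc (a+1) (ℓ-1) = Set.Icc (a+1) (ℓ-1) := by
          ext x
          constructor
          · exact fun hx => hx.2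
          · intro hx
            have hx1 : a + 1 ≤ x := hx.1
            have hx2 : x ≤ ℓ - 1 := hx.2
            exact ⟨hmin x (by omega) (by omega), hx⟩
        have hfc : (S ∩ Set.Icc (a+1) (ℓ-1)).ncard = ℓ - 1 - a := by
          rw [hfull, dp_Icc_ncard]; omega
        have hpair := dp_pairing S hS ℓ hlS
        rw [hsplit, hfc] at hpair
        omega
      · push_neg at hgap
        have hsub : Sᶜ ∩ Set.Icc 1 a = Sᶜ := by
          apply Set.inter_eq_left.2
          intro x hx
          refine ⟨Nat.one_le_iff_ne_zero.2 (fun h => hx (h ▸ h0)), ?_⟩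
          by_contra h
          exact hx (hgap x (by omega))
        have hsum := dp_sum S 1 a
        rw [dp_Icc_ncard, hsub, hg] at hsum
        omega
    · have hpair := dp_pairing S hS a haS
      have heq : S ∩ Set.Icc 1 a = S ∩ Set.Icc 1 (a-1) := by
        ext x
        simp only [Set.mem_inter_iff, Set.mem_Icc]
        constructor
        · rintro ⟨hx, h1, h2⟩
          refine ⟨hx, h1, ?_⟩
          have hne : x ≠ a := fun h => haS (by rw [← h]; exact hx)
          omega
        · rintro ⟨hx, h1, h2⟩
          exact ⟨hx, h1, by omega⟩
      rw [heq]
      omega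
  refine ⟨part1, ?_⟩
  have hgapbound : ∀ ℓ, ℓ ∉ S → ℓ + 1 ≤ 2 * g := by
    intro ℓ hl
    have hl1 : 1 ≤ ℓ := Nat.one_le_iff_ne_zero.2 (fun h => hl (h ▸ h0))
    have hpair := dp_pairing S hS ℓ hl
    have hsum := dp_sum S 1 (ℓ-1)
    rw [dp_Icc_ncard] at hsum
    have hNG : (Sᶜ ∩ Set.Icc 1 (ℓ-1)).ncard + 1 ≤ g := by
      have hins : insert ℓ (Sᶜ ∩ Set.Icc 1 (ℓ-1)) ⊆ Sᶜ := by
        intro x hx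
        rcases hx with rfl | hx
        · exact hl
        · exact hx.1
      have hnot : ℓ ∉ (Sᶜ ∩ Set.Icc 1 (ℓ-1)) := by
        intro h
        have := h.2.2
        omega
      have hcard := Set.ncard_insert_of_notMem hnot
        ((Set.finite_Icc 1 (ℓ-1)).subset Set.inter_subset_right)
      have hle := Set.ncard_le_ncard hins hfin
      rw [hcard, hg] at hle
      omega
    omega
  have hsub2g : Sᶜ ∩ Set.Icc 1 (2*g) = Sᶜ := by
    apply Set.inter_eq_left.2
    intro x hx
    exact ⟨Nat.one_le_iff_ne_zero.2 (fun h => hx (h ▸ h0)), by have := hgapbound x hx; omega⟩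
  have hsum2g := dp_sum S 1 (2*g)
  rw [dp_Icc_ncard, hsub2g, hg] at hsum2g
  have hsplit := dp_split S a (2*g) ha2
  omega
end

section
/- Let S be a numerical semigroup of genus g satisfying the Dyck path property (for all 1 ≤ a ≤ 2g, #{w ∈ S : 1 ≤ w ≤ a} ≤ a/2). For every integer m with 2g < m ≤ 4g, there exist u, v ∈ S with u + v = m and m - 2g - 1 ≤ u, v ≤ 2g + 1. -/
/-- If `2g < m ≤ 4g`, then the interval `[m - 2g - 1, 2g + 1]` contains two
nongaps `u, v` with `u + v = m`. -/
theorem nongap_pair_in_interval (S : Set ℕ) (g m : ℕ)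
    (hS : IsNumSemigroup S) (hg : Sᶜ.ncard = g)
    (hdyck : ∀ a : ℕ, 1 ≤ a → a ≤ 2 * g → 2 * (S ∩ Set.Icc 1 a).ncard ≤ a)
    (hm1 : 2 * g < m) (hm2 : m ≤ 4 * g) :
    ∃ u v : ℕ, u ∈ S ∧ v ∈ S ∧ u + v = m ∧
      m - 2 * g - 1 ≤ u ∧ u ≤ 2 * g + 1 ∧
      m - 2 * g - 1 ≤ v ∧ v ≤ 2 * g + 1 := by
  by_contra hcon
  push_neg at hcon
  obtain ⟨h0, hadd, hfin⟩ := hS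
  set lo := m - 2 * g - 1 with hlo
  set a := m - 2 * g - 2 with ha
  set J : Set ℕ := Set.Icc lo (2 * g + 1) with hJdef
  have hJfin : J.Finite := Set.finite_Icc _ _
  have hJcard : J.ncard = 2 * g + 1 + 1 - lo := by
    rw [hJdef, ← Finset.coe_Icc, Set.ncard_coe_finset, Nat.card_Icc]
  -- the map u ↦ m - u sends S ∩ J into J \ S
  have hmap : ∀ u ∈ S ∩ J, m - u ∈ J \ S := by
    rintro u ⟨huS, hu1, hu2⟩
    simp only [hJdef, Set.mem_Icc] at hu1 hu2 ⊢
    refine ⟨⟨by omega, by omega⟩, fun hv => ?_⟩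
    have := hcon u (m - u) huS hv (by omega) (by omega) (by omega) (by omega)
    omega
  have hinj : Set.InjOn (fun u => m - u) (S ∩ J) := by
    rintro u ⟨_, hu⟩ u' ⟨_, hu'⟩ h
    simp only [hJdef, Set.mem_Icc] at hu hu'
    simp only at h
    omega
  have hJSfin : (J \ S).Finite := hJfin.subset Set.diff_subset
  have hSJfin : (S ∩ J).Finite := hJfin.subset Set.inter_subset_right
  have h1 : (S ∩ J).ncard ≤ (J \ S).ncard := by
    calc (S ∩ J).ncard = ((fun u => m - u) '' (S ∩ J)).ncard :=
          (Set.ncard_image_of_injOn hinj).symm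
      _ ≤ (J \ S).ncard := by
          apply Set.ncard_le_ncard _ hJSfin
          rintro v ⟨u, hu, rfl⟩
          exact hmap u hu
  have hpart : (J ∩ S).ncard + (J \ S).ncard = J.ncard :=
    Set.ncard_inter_add_ncard_diff_eq_ncard J S hJfin
  rw [Set.inter_comm] at hpart
  -- gaps in [1, a]
  set B : Set ℕ := Set.Icc 1 a \ S with hBdef
  have hBfin : B.Finite := (Set.finite_Icc _ _).subset Set.diff_subset
  have hIcard : (Set.Icc 1 a).ncard = a := by
    rw [← Finset.coe_Icc, Set.ncard_coe_finset, Nat.card_Icc]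
    omega
  have hpart2 : (Set.Icc 1 a ∩ S).ncard + B.ncard = a := by
    rw [hBdef, Set.ncard_inter_add_ncard_diff_eq_ncard _ _ (Set.finite_Icc _ _), hIcard]
  have hBbound : 2 * B.ncard ≥ a := by
    rcases Nat.eq_zero_or_pos a with h | h
    · omega
    · have := hdyck a h (by omega)
      rw [Set.inter_comm] at hpart2
      omega
  -- combine: J \ S and B are disjoint subsets of the gaps
  have hdisj : Disjoint (J \ S) B := by
    rw [Set.disjoint_left]
    rintro x ⟨hx, _⟩ ⟨hx', _⟩
    simp only [hJdef, Set.mem_Icc] at hx hx'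
    omega
  have hsub : (J \ S) ∪ B ⊆ Sᶜ := by
    rintro x (⟨_, hx⟩ | ⟨_, hx⟩) <;> exact hx
  have hle : (J \ S).ncard + B.ncard ≤ g := by
    rw [← hg, ← Set.ncard_union_eq hdisj hJSfin hBfin]
    exact Set.ncard_le_ncard hsub hfin
  omega
end

section
/- Let G be an n × n invertible matrix over a finite field F such that for some invertible diagonal matrix M, the matrix B = G M G^T satisfies B_{i,j} = 0 whenever i + j ≤ n and B_{i,j} ≠ 0 whenever i + j = n + 1. Then for each 0 ≤ i ≤ n, the row space C_i of the first i rows of G and the row space C_{n-i} of the first n - i rows satisfy: C_{n-i} · M is the orthogonal complement of C_i in F^n (with respect to the standard bilinear form). -/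
/-- Orthogonal complement of a subspace of `ι → F` with respect to the standard
bilinear form `⟨x, y⟩ = ∑ k, x k * y k`. -/
def orthComp {F : Type} [Field F] {ι : Type} [Fintype ι]
    (W : Submodule F (ι → F)) : Submodule F (ι → F) where
  carrier := {x | ∀ y ∈ W, ∑ k, x k * y k = 0}
  zero_mem' := by intro y hy; simp
  add_mem' := by
    intro a b ha hb y hy
    have h : (∑ k, a k * y k) + (∑ k, b k * y k) = 0 := by
      rw [ha y hy, hb y hy, add_zero]
    simpa [add_mul, Finset.sum_add_distrib] using h
  smul_mem' := by
    intro c x hx y hy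
    have h := hx y hy
    simp only [Set.mem_setOf_eq, Pi.smul_apply, smul_eq_mul, mul_assoc]
    rw [← Finset.mul_sum, h, mul_zero]

/-- Right multiplication of a row vector by the diagonal matrix `diag v`,
as a linear map. -/
def diagMap {F : Type} [Field F] {ι : Type} [Fintype ι] (v : ι → F) :
    (ι → F) →ₗ[F] (ι → F) :=
  LinearMap.pi fun k => v k • LinearMap.proj k

/-! The dot product of row `k` of `G · diag v` with row `l` of `G` is the entry `B k l` of
`B = G · diag v · Gᵀ`, so the vanishing of `B` above the antidiagonal gives
`C_{n-i} · diag v ≤ C_iᗮ`. Both sides have dimension `n - i`: the rows of `G` are independent,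
`diag v` is injective, and the dot product is nondegenerate. -/

open Matrix Module Submodule

section OrthComp

variable {F : Type} [Field F] {ι : Type} [Fintype ι]

theorem mem_orthComp {W : Submodule F (ι → F)} {x : ι → F} :
    x ∈ orthComp W ↔ ∀ y ∈ W, x ⬝ᵥ y = 0 :=
  Iff.rfl

theorem orthComp_eq_comap_dualAnnihilator [DecidableEq ι] (W : Submodule F (ι → F)) :
    orthComp W = W.dualAnnihilator.comap (dotProductEquiv F ι).toLinearMap := by
  ext x
  simp only [mem_orthComp, mem_comap, mem_dualAnnihilator]
  rfl

theorem finrank_orthComp (W : Submodule F (ι → F)) :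
    finrank F (orthComp W) = Fintype.card ι - finrank F W := by
  classical
  have hdim := Subspace.finrank_add_finrank_dualAnnihilator_eq W
  rw [finrank_fintype_fun_eq_card] at hdim
  rw [orthComp_eq_comap_dualAnnihilator, comap_equiv_eq_map_symm, LinearEquiv.finrank_map_eq]
  omega

theorem span_le_orthComp_span {s t : Set (ι → F)} (h : ∀ x ∈ s, ∀ y ∈ t, x ⬝ᵥ y = 0) :
    span F s ≤ orthComp (span F t) := by
  rw [span_le]
  intro x hx
  have hker : span F t ≤ LinearMap.ker (dotProductBilin F F x) := by
    rw [span_le]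
    exact h x hx
  exact hker

end OrthComp

section DiagMap

variable {F : Type} [Field F] {ι : Type} [Fintype ι]

@[simp]
theorem diagMap_apply (v x : ι → F) (k : ι) : diagMap v x k = v k * x k :=
  rfl

theorem diagMap_injective {v : ι → F} (hv : ∀ k, v k ≠ 0) : Function.Injective (diagMap v) :=
  fun x y hxy => funext fun k => mul_left_cancel₀ (hv k) (by simpa using congrFun hxy k)

theorem finrank_map_diagMap {v : ι → F} (hv : ∀ k, v k ≠ 0) (W : Submodule F (ι → F)) :
    finrank F (W.map (diagMap v)) = finrank F W :=
  (equivMapOfInjective _ (diagMap_injective hv) W).finrank_eq.symm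

theorem diagMap_dotProduct [DecidableEq ι] (G : Matrix ι ι F) (v : ι → F) (a b : ι) :
    diagMap v (G a) ⬝ᵥ G b = (G * diagonal v * Gᵀ) a b := by
  rw [mul_apply]
  simp only [mul_diagonal, transpose_apply, dotProduct, diagMap_apply]
  exact Finset.sum_congr rfl fun k _ => by ring

end DiagMap

section FirstRows

variable {V : Type} [AddCommGroup V] {n : ℕ}

/-- The paper's `C_i`. -/
def firstRowsSpan (F : Type) [Field F] [Module F V] (b : Fin n → V) (i : ℕ) : Submodule F V :=
  span F {x | ∃ k : Fin n, (k : ℕ) < i ∧ x = b k}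

variable {F : Type} [Field F] [Module F V]

theorem firstRowsSpan_eq_span_range (b : Fin n → V) {i : ℕ} (hi : i ≤ n) :
    firstRowsSpan F b i = span F (Set.range (b ∘ Fin.castLE hi)) := by
  have hrange : {x | ∃ k : Fin n, (k : ℕ) < i ∧ x = b k} = Set.range (b ∘ Fin.castLE hi) := by
    ext x
    constructor
    · rintro ⟨k, hk, rfl⟩
      exact ⟨⟨k, hk⟩, rfl⟩
    · rintro ⟨j, rfl⟩
      exact ⟨Fin.castLE hi j, j.isLt, rfl⟩
  rw [firstRowsSpan, hrange]

theorem finrank_firstRowsSpan {b : Fin n → V} (hb : LinearIndependent F b) {i : ℕ} (hi : i ≤ n) :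
    finrank F (firstRowsSpan F b i) = i := by
  rw [firstRowsSpan_eq_span_range b hi,
    finrank_span_eq_card (hb.comp _ (Fin.castLE_injective hi)), Fintype.card_fin]

end FirstRows

theorem map_diagMap_firstRowsSpan_le_orthComp {F : Type} [Field F] {n : ℕ}
    {G : Matrix (Fin n) (Fin n) F} {v : Fin n → F}
    (hzero : ∀ i j : Fin n, (i : ℕ) + (j : ℕ) + 2 ≤ n →
      (G * Matrix.diagonal v * G.transpose) i j = 0) (i : ℕ) :
    (firstRowsSpan F G (n - i)).map (diagMap v) ≤ orthComp (firstRowsSpan F G i) := by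
  unfold firstRowsSpan
  rw [map_span]
  refine span_le_orthComp_span ?_
  rintro _ ⟨_, ⟨a, ha, rfl⟩, rfl⟩ _ ⟨b, hb, rfl⟩
  rw [diagMap_dotProduct]
  exact hzero a b (by omega)

theorem flag_isometry_dual_of_antidiagonal_general {F : Type} [Field F] {n : ℕ}
    (G : Matrix (Fin n) (Fin n) F) (hG : IsUnit G.det)
    (v : Fin n → F) (hv : ∀ k, v k ≠ 0)
    (hzero : ∀ i j : Fin n, (i : ℕ) + (j : ℕ) + 2 ≤ n →
      (G * Matrix.diagonal v * G.transpose) i j = 0) :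
    ∀ i : ℕ, i ≤ n →
      Submodule.map (diagMap v)
          (Submodule.span F {x | ∃ k : Fin n, (k : ℕ) < n - i ∧ x = G k}) =
        orthComp (Submodule.span F {x | ∃ k : Fin n, (k : ℕ) < i ∧ x = G k}) := by
  intro i hi
  show (firstRowsSpan F G (n - i)).map (diagMap v) = orthComp (firstRowsSpan F G i)
  have hrows : LinearIndependent F G :=
    linearIndependent_rows_iff_isUnit.2 ((isUnit_iff_isUnit_det G).2 hG)
  refine eq_of_le_of_finrank_eq (map_diagMap_firstRowsSpan_le_orthComp hzero i) ?_
  rw [finrank_map_diagMap hv, finrank_orthComp, Fintype.card_fin,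
    finrank_firstRowsSpan hrows (Nat.sub_le n i), finrank_firstRowsSpan hrows hi]

/-- If `G` is invertible and `B = G (diag v) Gᵀ` is zero above the anti-diagonal and
nonzero on it (rows/columns numbered `1, …, n`), then for each `0 ≤ i ≤ n` the image
under `diag v` of the span `C_{n-i}` of the first `n - i` rows of `G` is the orthogonal
complement of the span `C_i` of the first `i` rows. -/
theorem flag_isometry_dual_of_antidiagonal {F : Type} [Field F] [Fintype F] {n : ℕ}
    (G : Matrix (Fin n) (Fin n) F) (hG : IsUnit G.det)
    (v : Fin n → F) (hv : ∀ k, v k ≠ 0)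
    (hzero : ∀ i j : Fin n, (i : ℕ) + (j : ℕ) + 2 ≤ n →
      (G * Matrix.diagonal v * G.transpose) i j = 0)
    (hpivot : ∀ i j : Fin n, (i : ℕ) + (j : ℕ) + 2 = n + 1 →
      (G * Matrix.diagonal v * G.transpose) i j ≠ 0) :
    ∀ i : ℕ, i ≤ n →
      Submodule.map (diagMap v)
          (Submodule.span F {x | ∃ k : Fin n, (k : ℕ) < n - i ∧ x = G k}) =
        orthComp (Submodule.span F {x | ∃ k : Fin n, (k : ℕ) < i ∧ x = G k}) :=
  flag_isometry_dual_of_antidiagonal_general G hG v hv hzero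
end
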